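/- Suppose x* ∈ ℝ^d satisfies ∇H(x*) = 0 and H(x*) = min H, that H is μ-quasi-strongly convex with respect to x* for some μ > 0, and that expected smoothness holds with constant ℒ > 0: (1/n²)∑_{i,j=1}^n ‖∇H_{i,j}(x) − ∇H_{i,j}(x*)‖² ≤ 2ℒ(H(x) − H(x*)) for all x ∈ ℝ^d. Set σ² = (1/n²)∑_{i,j=1}^n ‖∇H_{i,j}(x*)‖². Then for any constant step size γ^k ≡ γ ∈ (0, 1/(2ℒ)], the SHGD iterates satisfy E‖x^k − x*‖² ≤ (1 − γμ)^k ‖x⁰ − x*‖² + 2γσ²/μ for all k ≥ 0. -/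

import Mathlib

/-!
Averaging over the pair `(i, j)`, one step satisfies
`E‖x⁺ - x*‖² = ‖x - x*‖² - 2γ⟪x - x*, ∇H(x)⟫ + γ² E‖∇H_{ij}(x)‖²`.
Quasi-strong convexity bounds the cross term below by `H(x) - H(x*) + μ/2 ‖x - x*‖²`, and
`‖a‖² ≤ 2‖a - b‖² + 2‖b‖²` with expected smoothness bounds the last expectation by
`4ℒ (H(x) - H(x*)) + 2σ²`. For `γ ≤ 1/(2ℒ)` the function-gap terms have a good sign, leaving the
contraction `E‖x⁺ - x*‖² ≤ (1 - γμ)‖x - x*‖² + 2γ²σ²`; unrolling it and bounding the geometric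
series by `1/(γμ)` gives the claim. The factor `1 - γμ` is nonnegative because the contraction
holds at points arbitrarily far from `x*`, unless the space is a single point.
-/

open scoped RealInnerProductSpace BigOperators

noncomputable section

variable {n d1 d2 : ℕ}

/-- The signed gradient field ξᵢ(x) = (∇_{x1} gᵢ(x), −∇_{x2} gᵢ(x)). -/
def xi (g : EuclideanSpace ℝ (Fin d1 ⊕ Fin d2) → ℝ)
    (x : EuclideanSpace ℝ (Fin d1 ⊕ Fin d2)) : EuclideanSpace ℝ (Fin d1 ⊕ Fin d2) :=
  (WithLp.equiv 2 _).symm (Sum.elim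
    (fun a => gradient g x (Sum.inl a))
    (fun j => -(gradient g x (Sum.inr j))))

/-- The Hamiltonian component H_{i,j}(x) = ½⟨ξᵢ(x), ξⱼ(x)⟩. -/
def HamComp (g : Fin n → EuclideanSpace ℝ (Fin d1 ⊕ Fin d2) → ℝ) (i j : Fin n)
    (x : EuclideanSpace ℝ (Fin d1 ⊕ Fin d2)) : ℝ :=
  (1 / 2 : ℝ) * ⟪xi (g i) x, xi (g j) x⟫

/-- The Hamiltonian H(x) = ½‖(1/n)∑ᵢξᵢ(x)‖². -/
def Ham (g : Fin n → EuclideanSpace ℝ (Fin d1 ⊕ Fin d2) → ℝ)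
    (x : EuclideanSpace ℝ (Fin d1 ⊕ Fin d2)) : ℝ :=
  (1 / 2 : ℝ) * ‖(n : ℝ)⁻¹ • ∑ i, xi (g i) x‖ ^ 2

/-- `shgdExp g γ t k φ x` is the expectation E[φ(x^{t+k}) | x^t = x] for the SHGD
iteration x^{m+1} = x^m − γ^m ∇H_{i_m,j_m}(x^m) with (i_m, j_m) i.i.d. uniform on
{1,…,n}².  In particular `shgdExp g γ 0 k φ x⁰ = E[φ(x^k)]`. -/
def shgdExp (g : Fin n → EuclideanSpace ℝ (Fin d1 ⊕ Fin d2) → ℝ) (γ : ℕ → ℝ) :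
    ℕ → ℕ → (EuclideanSpace ℝ (Fin d1 ⊕ Fin d2) → ℝ) →
      EuclideanSpace ℝ (Fin d1 ⊕ Fin d2) → ℝ
  | _, 0, φ => φ
  | t, k + 1, φ => fun x => ((n : ℝ) ^ 2)⁻¹ * ∑ i, ∑ j,
      shgdExp g γ (t + 1) k φ (x - γ t • gradient (HamComp g i j) x)

theorem nonneg_of_forall_mul_norm_sq_add_nonneg {F : Type*} [NormedAddCommGroup F]
    [NormedSpace ℝ F] [Nontrivial F] {r c : ℝ} (h : ∀ v : F, 0 ≤ r * ‖v‖ ^ 2 + c) : 0 ≤ r := by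
  by_contra! hr
  obtain ⟨v, hv⟩ := exists_norm_eq F (Real.sqrt_nonneg ((|c| + 1) / -r))
  have hv2 : r * ‖v‖ ^ 2 = -(|c| + 1) := by
    rw [hv, Real.sq_sqrt (div_nonneg (by positivity) (by linarith))]
    field_simp [hr.ne]
  linarith [h v, le_abs_self c]

theorem ContDiff.differentiable_gradient {E : Type*} [NormedAddCommGroup E]
    [InnerProductSpace ℝ E] [CompleteSpace E] {f : E → ℝ} (hf : ContDiff ℝ 2 f) :
    Differentiable ℝ (gradient f) :=
  (InnerProductSpace.toDual ℝ E).symm.toContinuousLinearEquiv.differentiable.comp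
    ((hf.fderiv_right (m := 1) le_rfl).differentiable one_ne_zero)

theorem differentiable_xi {f : EuclideanSpace ℝ (Fin d1 ⊕ Fin d2) → ℝ} (hf : ContDiff ℝ 2 f) :
    Differentiable ℝ (xi f) := by
  have hgrad := differentiable_euclidean.1 hf.differentiable_gradient
  refine differentiable_euclidean.2 ?_
  rintro (a | b)
  · exact hgrad (Sum.inl a)
  · exact (hgrad (Sum.inr b)).neg

theorem differentiable_hamComp {g : Fin n → EuclideanSpace ℝ (Fin d1 ⊕ Fin d2) → ℝ}
    (hg : ∀ i, ContDiff ℝ 2 (g i)) (i j : Fin n) : Differentiable ℝ (HamComp g i j) :=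
  ((differentiable_xi (hg i)).inner ℝ (differentiable_xi (hg j))).const_mul _

theorem ham_eq_mean_hamComp (g : Fin n → EuclideanSpace ℝ (Fin d1 ⊕ Fin d2) → ℝ) :
    Ham g = fun x => ((n : ℝ) ^ 2)⁻¹ * ∑ i, ∑ j, HamComp g i j x := by
  ext x
  simp only [Ham, HamComp, norm_smul, mul_pow, ← real_inner_self_eq_norm_sq, sum_inner, inner_sum,
    Finset.mul_sum, Real.norm_eq_abs, sq_abs, inv_pow]
  rw [Finset.sum_comm]
  ring_nf

theorem gradient_ham {g : Fin n → EuclideanSpace ℝ (Fin d1 ⊕ Fin d2) → ℝ}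
    (hg : ∀ i, ContDiff ℝ 2 (g i)) (x : EuclideanSpace ℝ (Fin d1 ⊕ Fin d2)) :
    gradient (Ham g) x = ((n : ℝ) ^ 2)⁻¹ • ∑ i, ∑ j, gradient (HamComp g i j) x := by
  have hderiv : HasFDerivAt (Ham g) (((n : ℝ) ^ 2)⁻¹ • ∑ i, ∑ j, fderiv ℝ (HamComp g i j) x) x := by
    rw [ham_eq_mean_hamComp]
    exact (HasFDerivAt.fun_sum fun i _ => HasFDerivAt.fun_sum fun j _ =>
      (differentiable_hamComp hg i j x).hasFDerivAt).const_mul _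
  simp only [gradient, hderiv.fderiv, map_smul, map_sum]

theorem sum_sq_dist_sgd_step_le {E ι : Type*} [NormedAddCommGroup E] [InnerProductSpace ℝ E]
    [Fintype ι] {x xstar G : E} {a b : ι → E} {D μ ℒ γ : ℝ}
    (hG : ∑ i, a i = (Fintype.card ι : ℝ) • G)
    (hqsc : D + μ / 2 * ‖x - xstar‖ ^ 2 ≤ ⟪x - xstar, G⟫)
    (hES : ∑ i, ‖a i - b i‖ ^ 2 ≤ Fintype.card ι * (2 * ℒ * D))
    (hD : 0 ≤ D) (hγ : 0 ≤ γ) (hγℒ : 2 * γ * ℒ ≤ 1) :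
    ∑ i, ‖x - γ • a i - xstar‖ ^ 2
      ≤ Fintype.card ι * ((1 - γ * μ) * ‖x - xstar‖ ^ 2) + 2 * γ ^ 2 * ∑ i, ‖b i‖ ^ 2 := by
  set N : ℝ := (Fintype.card ι : ℝ)
  have hexpand : ∑ i, ‖x - γ • a i - xstar‖ ^ 2
      = N * ‖x - xstar‖ ^ 2 - 2 * γ * N * ⟪x - xstar, G⟫ + γ ^ 2 * ∑ i, ‖a i‖ ^ 2 := by
    simp only [sub_right_comm x, norm_sub_sq_real (x - xstar), inner_smul_right, norm_smul,
      mul_pow, Real.norm_eq_abs, sq_abs, Finset.sum_add_distrib, Finset.sum_sub_distrib,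
      ← Finset.mul_sum, ← inner_sum, hG, inner_smul_right, Finset.sum_const, Finset.card_univ,
      nsmul_eq_mul]
    ring
  have hsplit : ∑ i, ‖a i‖ ^ 2 ≤ 2 * ∑ i, ‖a i - b i‖ ^ 2 + 2 * ∑ i, ‖b i‖ ^ 2 := by
    rw [Finset.mul_sum, Finset.mul_sum, ← Finset.sum_add_distrib]
    refine Finset.sum_le_sum fun i _ => ?_
    have hpar := parallelogram_law_with_norm ℝ (a i - b i) (b i)
    rw [sub_add_cancel] at hpar
    nlinarith [sq_nonneg ‖a i - b i - b i‖]
  have hN : 0 ≤ N := Nat.cast_nonneg _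
  rw [hexpand]
  nlinarith [mul_le_mul_of_nonneg_left hqsc (by positivity : 0 ≤ 2 * γ * N),
    mul_le_mul_of_nonneg_left hsplit (sq_nonneg γ), mul_le_mul_of_nonneg_left hES (sq_nonneg γ),
    mul_nonneg (mul_nonneg (mul_nonneg hγ hN) hD) (sub_nonneg.2 hγℒ)]

theorem mean_sq_dist_shgd_step_le (hn : 0 < n)
    {g : Fin n → EuclideanSpace ℝ (Fin d1 ⊕ Fin d2) → ℝ} (hg : ∀ i, ContDiff ℝ 2 (g i))
    {x xstar : EuclideanSpace ℝ (Fin d1 ⊕ Fin d2)} (hmin : Ham g xstar ≤ Ham g x) {μ : ℝ}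
    (hqsc : Ham g x + ⟪gradient (Ham g) x, xstar - x⟫ + μ / 2 * ‖xstar - x‖ ^ 2 ≤ Ham g xstar)
    {ℒ : ℝ}
    (hES : ((n : ℝ) ^ 2)⁻¹ *
        ∑ i, ∑ j, ‖gradient (HamComp g i j) x - gradient (HamComp g i j) xstar‖ ^ 2
      ≤ 2 * ℒ * (Ham g x - Ham g xstar))
    {γ : ℝ} (hγ : 0 ≤ γ) (hγℒ : 2 * γ * ℒ ≤ 1) :
    ((n : ℝ) ^ 2)⁻¹ * ∑ i, ∑ j, ‖x - γ • gradient (HamComp g i j) x - xstar‖ ^ 2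
      ≤ (1 - γ * μ) * ‖x - xstar‖ ^ 2
        + 2 * γ ^ 2 * (((n : ℝ) ^ 2)⁻¹ * ∑ i, ∑ j, ‖gradient (HamComp g i j) xstar‖ ^ 2) := by
  have hN : (0 : ℝ) < (n : ℝ) ^ 2 := by positivity
  have hcard : (Fintype.card (Fin n × Fin n) : ℝ) = (n : ℝ) ^ 2 := by simp [sq]
  have hstep := sum_sq_dist_sgd_step_le (x := x) (xstar := xstar) (G := gradient (Ham g) x) (μ := μ)
    (a := fun p : Fin n × Fin n => gradient (HamComp g p.1 p.2) x)
    (b := fun p => gradient (HamComp g p.1 p.2) xstar) ?_ ?_ ?_ (sub_nonneg.2 hmin) hγ hγℒ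
  · simp only [Fintype.sum_prod_type, hcard] at hstep
    rw [inv_mul_le_iff₀ hN]
    refine hstep.trans_eq ?_
    field_simp
  · rw [Fintype.sum_prod_type, hcard, gradient_ham hg, smul_inv_smul₀ hN.ne']
  · rw [← norm_neg, neg_sub, ← neg_sub x, inner_neg_right, real_inner_comm] at hqsc
    linarith
  · rw [Fintype.sum_prod_type, hcard, ← inv_mul_le_iff₀ hN]
    exact hES

theorem shgdExp_le_of_step (hn : 0 < n) {g : Fin n → EuclideanSpace ℝ (Fin d1 ⊕ Fin d2) → ℝ}
    {Φ : EuclideanSpace ℝ (Fin d1 ⊕ Fin d2) → ℝ} {γ r c : ℝ} (hr : 0 ≤ r)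
    (hstep : ∀ x, ((n : ℝ) ^ 2)⁻¹ * ∑ i, ∑ j, Φ (x - γ • gradient (HamComp g i j) x)
      ≤ r * Φ x + c) (k t : ℕ) (x : EuclideanSpace ℝ (Fin d1 ⊕ Fin d2)) :
    shgdExp g (fun _ => γ) t k Φ x ≤ r ^ k * Φ x + c * ∑ m ∈ Finset.range k, r ^ m := by
  induction k generalizing t x with
  | zero => simp [shgdExp]
  | succ k ih =>
    calc shgdExp g (fun _ => γ) t (k + 1) Φ x
        ≤ ((n : ℝ) ^ 2)⁻¹ * ∑ i, ∑ j, (r ^ k * Φ (x - γ • gradient (HamComp g i j) x)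
            + c * ∑ m ∈ Finset.range k, r ^ m) := by
          simp only [shgdExp]
          gcongr with i _ j _
          exact ih _ _
      _ = r ^ k * (((n : ℝ) ^ 2)⁻¹ * ∑ i, ∑ j, Φ (x - γ • gradient (HamComp g i j) x))
            + c * ∑ m ∈ Finset.range k, r ^ m := by
          simp only [Finset.sum_add_distrib, ← Finset.mul_sum, Finset.sum_const, Finset.card_univ,
            Fintype.card_fin, nsmul_eq_mul]
          field_simp
      _ ≤ r ^ k * (r * Φ x + c) + c * ∑ m ∈ Finset.range k, r ^ m := by
          gcongr
          exact hstep x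
      _ = r ^ (k + 1) * Φ x + c * ∑ m ∈ Finset.range (k + 1), r ^ m := by
          rw [Finset.sum_range_succ]
          ring

theorem shgd_constant_stepsize_general
    (hn : 0 < n) (g : Fin n → EuclideanSpace ℝ (Fin d1 ⊕ Fin d2) → ℝ)
    (hg : ∀ i, ContDiff ℝ 2 (g i))
    (xstar : EuclideanSpace ℝ (Fin d1 ⊕ Fin d2))
    (hmin : ∀ y, Ham g xstar ≤ Ham g y)
    (μ : ℝ) (hμ : 0 < μ)
    -- quasi-strong convexity of H with respect to x*
    (hqsc : ∀ x, Ham g x + ⟪gradient (Ham g) x, xstar - x⟫ + μ / 2 * ‖xstar - x‖ ^ 2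
      ≤ Ham g xstar)
    (ℒ : ℝ) (hℒ : 0 < ℒ)
    -- expected smoothness
    (hES : ∀ x, ((n : ℝ) ^ 2)⁻¹ *
        ∑ i, ∑ j, ‖gradient (HamComp g i j) x - gradient (HamComp g i j) xstar‖ ^ 2
      ≤ 2 * ℒ * (Ham g x - Ham g xstar))
    (σ2 : ℝ)
    (hσ2 : σ2 = ((n : ℝ) ^ 2)⁻¹ * ∑ i, ∑ j, ‖gradient (HamComp g i j) xstar‖ ^ 2)
    (γ : ℝ) (hγ0 : 0 < γ) (hγ : γ ≤ 1 / (2 * ℒ))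
    (x0 : EuclideanSpace ℝ (Fin d1 ⊕ Fin d2)) :
    ∀ k : ℕ, shgdExp g (fun _ => γ) 0 k (fun x => ‖x - xstar‖ ^ 2) x0
      ≤ (1 - γ * μ) ^ k * ‖x0 - xstar‖ ^ 2 + 2 * γ * σ2 / μ := by
  intro k
  have hγℒ : 2 * γ * ℒ ≤ 1 := by
    rw [le_div_iff₀ (by positivity)] at hγ
    linarith
  have hσ2_nonneg : 0 ≤ σ2 := hσ2 ▸ by positivity
  have hstep x : ((n : ℝ) ^ 2)⁻¹ * ∑ i, ∑ j, ‖x - γ • gradient (HamComp g i j) x - xstar‖ ^ 2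
      ≤ (1 - γ * μ) * ‖x - xstar‖ ^ 2 + 2 * γ ^ 2 * σ2 :=
    hσ2 ▸ mean_sq_dist_shgd_step_le hn hg (hmin x) (hqsc x) (hES x) hγ0.le hγℒ
  rcases subsingleton_or_nontrivial (EuclideanSpace ℝ (Fin d1 ⊕ Fin d2)) with hE | hE
  · have hdist x : ‖x - xstar‖ ^ 2 = 0 := by simp [Subsingleton.elim x xstar]
    have := shgdExp_le_of_step hn (g := g) (Φ := fun x => ‖x - xstar‖ ^ 2) (γ := γ) le_rfl
      (r := 0) (c := 0) (fun x => by simp [hdist]) k 0 x0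
    simp only [hdist, mul_zero, zero_mul, add_zero] at this ⊢
    exact this.trans (by positivity)
  · have hr : 0 ≤ 1 - γ * μ := nonneg_of_forall_mul_norm_sq_add_nonneg fun v => by
      simpa using (by positivity : (0 : ℝ) ≤ _).trans (hstep (v + xstar))
    have hgeom : ∑ m ∈ Finset.range k, (1 - γ * μ) ^ m ≤ 1 / (γ * μ) := by
      have := geom_sum_Ico_le_of_lt_one (m := 0) (n := k) hr (by nlinarith)
      rwa [← Finset.range_eq_Ico, pow_zero, sub_sub_cancel] at this
    calc shgdExp g (fun _ => γ) 0 k (fun x => ‖x - xstar‖ ^ 2) x0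
        ≤ (1 - γ * μ) ^ k * ‖x0 - xstar‖ ^ 2
            + 2 * γ ^ 2 * σ2 * ∑ m ∈ Finset.range k, (1 - γ * μ) ^ m :=
          shgdExp_le_of_step hn hr hstep k 0 x0
      _ ≤ (1 - γ * μ) ^ k * ‖x0 - xstar‖ ^ 2 + 2 * γ ^ 2 * σ2 * (1 / (γ * μ)) := by
          gcongr
      _ = (1 - γ * μ) ^ k * ‖x0 - xstar‖ ^ 2 + 2 * γ * σ2 / μ := by
          field_simp

theorem shgd_constant_stepsize
    (hn : 0 < n) (g : Fin n → EuclideanSpace ℝ (Fin d1 ⊕ Fin d2) → ℝ)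
    (hg : ∀ i, ContDiff ℝ 2 (g i))
    (xstar : EuclideanSpace ℝ (Fin d1 ⊕ Fin d2))
    (hcrit : gradient (Ham g) xstar = 0)
    (hmin : ∀ y, Ham g xstar ≤ Ham g y)
    (μ : ℝ) (hμ : 0 < μ)
    -- quasi-strong convexity of H with respect to x*
    (hqsc : ∀ x, Ham g x + ⟪gradient (Ham g) x, xstar - x⟫ + μ / 2 * ‖xstar - x‖ ^ 2
      ≤ Ham g xstar)
    (ℒ : ℝ) (hℒ : 0 < ℒ)
    -- expected smoothness
    (hES : ∀ x, ((n : ℝ) ^ 2)⁻¹ *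
        ∑ i, ∑ j, ‖gradient (HamComp g i j) x - gradient (HamComp g i j) xstar‖ ^ 2
      ≤ 2 * ℒ * (Ham g x - Ham g xstar))
    (σ2 : ℝ)
    (hσ2 : σ2 = ((n : ℝ) ^ 2)⁻¹ * ∑ i, ∑ j, ‖gradient (HamComp g i j) xstar‖ ^ 2)
    (γ : ℝ) (hγ0 : 0 < γ) (hγ : γ ≤ 1 / (2 * ℒ))
    (x0 : EuclideanSpace ℝ (Fin d1 ⊕ Fin d2)) :
    ∀ k : ℕ, shgdExp g (fun _ => γ) 0 k (fun x => ‖x - xstar‖ ^ 2) x0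
      ≤ (1 - γ * μ) ^ k * ‖x0 - xstar‖ ^ 2 + 2 * γ * σ2 / μ :=
  shgd_constant_stepsize_general hn g hg xstar hmin μ hμ hqsc ℒ hℒ hES σ2 hσ2 γ hγ0 hγ x0
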